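/- arXiv:1506.01512 — 4 statements merged into one kernel-verified Lean document; each statement's English description precedes it below -/
import Mathlib

section
/- For every integer n ≥ 2 and every real number p with 1 ≤ p < n/(n-1), set γ := 1 − 1/p (so 0 ≤ γ < 1/n). There exists a constant C = C(n,p) > 0 depending only on n and p with the following property. Let (α,β) ⊆ ℝ be a bounded open interval, let a_j ∈ C^{n-1,1}([α,β], ℂ) for j = 1,…,n, and let λ : (α,β) → ℂ be a continuous function such that λ(t)^n + Σ_{j=1}^n a_j(t) λ(t)^{n-j} = 0 for all t ∈ (α,β). Then λ is Hölder continuous of exponent γ and sup_{t∈(α,β)} |λ(t)| + sup_{t≠s∈(α,β)} |λ(t)−λ(s)|/|t−s|^γ ≤ C · max{1, (β−α)^{1/p}} · max_{1≤j≤n} ‖a_j‖_{C^{n-1,1}([α,β])}^{1/j}. -/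
open Set MeasureTheory Real

noncomputable section

/-- `f` is absolutely continuous on the set `S` : for every `ε > 0` there is `δ > 0` such
that for any finitely many non-overlapping intervals `[u i, v i] ⊆ S` of total length `< δ`
the sum `∑ ‖f (v i) - f (u i)‖` is `< ε`. -/
def AbsContOn {E : Type*} [NormedAddCommGroup E] (f : ℝ → E) (S : Set ℝ) : Prop :=
  ∀ ε : ℝ, 0 < ε → ∃ δ : ℝ, 0 < δ ∧
    ∀ (N : ℕ) (u v : Fin N → ℝ),
      (∀ i, u i ≤ v i ∧ Set.Icc (u i) (v i) ⊆ S) →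
      (∀ i j, i ≠ j → Disjoint (Set.Ioo (u i) (v i)) (Set.Ioo (u j) (v j))) →
      (∑ i, (v i - u i)) < δ →
      (∑ i, ‖f (v i) - f (u i)‖) < ε

/-- `d (i+1)` is the derivative of `d i` on `S` for all `i < k`; thus `d i` is the `i`-th
derivative of `d 0` on `S` for `i ≤ k`. -/
def DerivChain {E : Type*} [NormedAddCommGroup E] [NormedSpace ℝ E]
    (d : ℕ → ℝ → E) (k : ℕ) (S : Set ℝ) : Prop :=
  ∀ i < k, ∀ x ∈ S, HasDerivWithinAt (d i) (d (i + 1) x) S x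

/-- Hölder constant of exponent `a` of `g` on `S`. -/
def HolderConst {E : Type*} [NormedAddCommGroup E] (a : ℝ) (S : Set ℝ) (g : ℝ → E) : ℝ :=
  sSup {r : ℝ | ∃ x ∈ S, ∃ y ∈ S, x ≠ y ∧ r = ‖g x - g y‖ / |x - y| ^ a}

/-- Membership in `C^{k,1}(S)`, encoded via the chain of derivatives `d`:
`d 0` is `k` times differentiable with `i`-th derivative `d i`, and the top
derivative `d k` is Lipschitz. -/
def MemCk1 {E : Type*} [NormedAddCommGroup E] [NormedSpace ℝ E]
    (d : ℕ → ℝ → E) (k : ℕ) (S : Set ℝ) : Prop :=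
  DerivChain d k S ∧ ∃ L : ℝ, ∀ x ∈ S, ∀ y ∈ S, ‖d k x - d k y‖ ≤ L * |x - y|

/-- The `C^{k,1}`-norm: sup of all derivatives up to order `k` plus the Lipschitz
(Hölder-1) constant of the `k`-th derivative. -/
def CNorm {E : Type*} [NormedAddCommGroup E] (d : ℕ → ℝ → E) (k : ℕ) (S : Set ℝ) : ℝ :=
  sSup {r : ℝ | ∃ i ≤ k, ∃ x ∈ S, r = ‖d i x‖} + HolderConst 1 S (d k)

/-!
Cauchy's bound gives `‖λ‖ ≤ 2K` with `K = max_j ‖a_j‖_{C^{n-1,1}}^{1/j}`. Fix `s < t` and let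
`P_s` be the polynomial with coefficients frozen at `s`. Since the `a_j` are `K^j`-Lipschitz,
every value `λ τ` with `τ ∈ [s, t]` satisfies `‖P_s(λ τ)‖ ≤ n (2K)^n (t - s)`, and as
`‖P_s z‖ ≥ dist(z, roots of P_s)^n`, the path `λ([s, t])` stays within
`ε = 2nK (t - s)^{1/n}` of the at most `n` roots of `P_s`. A continuous path covered by `n`
balls of radius `ε` moves by at most `2nε`, so `‖λ t - λ s‖ ≤ 4n²K (t - s)^{1/n}`. Finally
`0 ≤ 1/n - γ ≤ 1/p` gives `(t - s)^{1/n - γ} ≤ max 1 ((β - α)^{1/p})`.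
-/

open Polynomial

theorem Polynomial.Monic.exists_mem_roots_norm_sub_pow_le {𝕜 : Type*} [NormedField 𝕜]
    [IsAlgClosed 𝕜] {P : 𝕜[X]} (hP : P.Monic) (hdeg : P.natDegree ≠ 0) (z : 𝕜) :
    ∃ r ∈ P.roots, ‖z - r‖ ^ P.natDegree ≤ ‖P.eval z‖ := by
  have hcard : Multiset.card P.roots = P.natDegree := IsAlgClosed.card_roots_eq_natDegree
  obtain ⟨r, hr, hmin⟩ := Multiset.exists_min_image (fun r => ‖z - r‖)
    (s := P.roots) (by rintro h; simp [h] at hcard; omega)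
  have hnorm (m : Multiset 𝕜) : ‖m.prod‖ = (m.map (‖·‖)).prod := map_multiset_prod normHom m
  refine ⟨r, hr, ?_⟩
  rw [(IsAlgClosed.splits P).eval_eq_prod_roots_of_monic hP, ← hcard,
    ← Multiset.prod_replicate, ← Multiset.map_const', hnorm, Multiset.map_map]
  exact Multiset.prod_map_le_prod_map₀ _ _ (fun _ _ => norm_nonneg _) hmin

section MonicPolynomial

variable {𝕜 : Type*} [NormedField 𝕜] {n : ℕ}

theorem exists_finset_card_le_forall_exists_norm_sub_pow_le [IsAlgClosed 𝕜] (hn : n ≠ 0)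
    (a : ℕ → 𝕜) :
    ∃ R : Finset 𝕜, R.card ≤ n ∧ ∀ z : 𝕜,
      ∃ r ∈ R, ‖z - r‖ ^ n ≤ ‖z ^ n + ∑ j ∈ Finset.Icc 1 n, a j * z ^ (n - j)‖ := by
  classical
  set P : 𝕜[X] := X ^ n + ∑ j ∈ Finset.Icc 1 n, C (a j) * X ^ (n - j)
  have hlow : (∑ j ∈ Finset.Icc 1 n, C (a j) * X ^ (n - j)).degree < (n : WithBot ℕ) := by
    refine (degree_sum_le _ _).trans_lt ((Finset.sup_lt_iff (WithBot.bot_lt_coe n)).2 ?_)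
    intro j hj
    refine (degree_C_mul_X_pow_le _ _).trans_lt ?_
    exact WithBot.coe_lt_coe.2 (Nat.sub_lt (Nat.pos_of_ne_zero hn) (Finset.mem_Icc.1 hj).1)
  have hP : P.Monic := monic_X_pow_add hlow
  have hdeg : P.natDegree = n := natDegree_eq_of_degree_eq_some <| by
    rw [degree_add_eq_left_of_degree_lt (by rwa [degree_X_pow]), degree_X_pow]
  refine ⟨P.roots.toFinset, (Multiset.toFinset_card_le _).trans
    (IsAlgClosed.card_roots_eq_natDegree.trans hdeg).le, fun z => ?_⟩
  obtain ⟨r, hr, hle⟩ := hP.exists_mem_roots_norm_sub_pow_le (hdeg ▸ hn) z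
  refine ⟨r, Multiset.mem_toFinset.2 hr, ?_⟩
  simpa [P, hdeg, eval_finsetSum] using hle

theorem norm_le_two_mul_of_pow_add_sum_eq_zero {a : ℕ → 𝕜} {K : ℝ} (hK : 0 ≤ K)
    (ha : ∀ j ∈ Finset.Icc 1 n, ‖a j‖ ≤ K ^ j) {z : 𝕜}
    (hz : z ^ n + ∑ j ∈ Finset.Icc 1 n, a j * z ^ (n - j) = 0) : ‖z‖ ≤ 2 * K := by
  by_contra! hzK
  have hz0 : 0 < ‖z‖ := by linarith
  set x := K / ‖z‖
  have hx0 : 0 ≤ x := by positivity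
  have hx : x < 1 / 2 := by rw [div_lt_iff₀ hz0]; linarith
  have hgeom : ∑ j ∈ Finset.Icc 1 n, x ^ j < 1 := by
    rw [← Finset.Ico_add_one_right_eq_Icc]
    calc ∑ j ∈ Finset.Ico 1 (n + 1), x ^ j ≤ x ^ 1 / (1 - x) :=
          geom_sum_Ico_le_of_lt_one hx0 (by linarith)
      _ < 1 := by rw [pow_one, div_lt_one (by linarith)]; linarith
  have hsum : ‖z‖ ^ n ≤ (∑ j ∈ Finset.Icc 1 n, x ^ j) * ‖z‖ ^ n := calc
    ‖z‖ ^ n = ‖∑ j ∈ Finset.Icc 1 n, a j * z ^ (n - j)‖ := by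
      rw [← norm_pow, eq_neg_of_add_eq_zero_left hz, norm_neg]
    _ ≤ ∑ j ∈ Finset.Icc 1 n, K ^ j * ‖z‖ ^ (n - j) := by
      refine norm_sum_le_of_le _ fun j hj => ?_
      rw [norm_mul, norm_pow]
      exact mul_le_mul_of_nonneg_right (ha j hj) (by positivity)
    _ = (∑ j ∈ Finset.Icc 1 n, x ^ j) * ‖z‖ ^ n := by
      rw [Finset.sum_mul]
      refine Finset.sum_congr rfl fun j hj => ?_
      rw [div_pow, div_mul_eq_mul_div, eq_div_iff (by positivity), mul_assoc, ← pow_add,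
        Nat.sub_add_cancel (Finset.mem_Icc.1 hj).2]
  nlinarith [pow_pos hz0 n]

theorem norm_pow_add_sum_le_of_pow_add_sum_eq_zero {a b : ℕ → 𝕜} {K δ : ℝ} (hK : 0 ≤ K)
    (hδ : 0 ≤ δ) (hab : ∀ j ∈ Finset.Icc 1 n, ‖a j - b j‖ ≤ K ^ j * δ) {z : 𝕜}
    (hz : z ^ n + ∑ j ∈ Finset.Icc 1 n, b j * z ^ (n - j) = 0) (hzK : ‖z‖ ≤ 2 * K) :
    ‖z ^ n + ∑ j ∈ Finset.Icc 1 n, a j * z ^ (n - j)‖ ≤ n * ((2 * K) ^ n * δ) := by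
  have hdiff : z ^ n + ∑ j ∈ Finset.Icc 1 n, a j * z ^ (n - j) =
      ∑ j ∈ Finset.Icc 1 n, (a j - b j) * z ^ (n - j) := by
    simp only [sub_mul, Finset.sum_sub_distrib]
    linear_combination hz
  have hterm : ∀ j ∈ Finset.Icc 1 n, ‖(a j - b j) * z ^ (n - j)‖ ≤ (2 * K) ^ n * δ := by
    intro j hj
    rw [norm_mul, norm_pow]
    calc ‖a j - b j‖ * ‖z‖ ^ (n - j) ≤ (2 * K) ^ j * δ * (2 * K) ^ (n - j) := by
          gcongr
          exact (hab j hj).trans (by gcongr; linarith)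
      _ = (2 * K) ^ n * δ := by
          rw [mul_right_comm, ← pow_add, Nat.add_sub_cancel' (Finset.mem_Icc.1 hj).2]
  calc _ = ‖∑ j ∈ Finset.Icc 1 n, (a j - b j) * z ^ (n - j)‖ := by rw [hdiff]
    _ ≤ ∑ j ∈ Finset.Icc 1 n, (2 * K) ^ n * δ := norm_sum_le_of_le _ hterm
    _ = n * ((2 * K) ^ n * δ) := by simp

end MonicPolynomial

theorem norm_sub_le_two_mul_card_mul_of_forall_exists_mem_finset {E : Type*}
    [NormedAddCommGroup E] {l : ℝ → E} {s t ε : ℝ} (hst : s ≤ t)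
    (hl : ContinuousOn l (Icc s t)) {R : Finset E}
    (hR : ∀ τ ∈ Icc s t, ∃ r ∈ R, ‖l τ - r‖ ≤ ε) :
    ‖l t - l s‖ ≤ 2 * R.card * ε := by
  set N := R.card
  have hN : (0 : ℝ) < N := by
    obtain ⟨r, hr, -⟩ := hR s (left_mem_Icc.2 hst)
    exact_mod_cast Finset.card_pos.2 ⟨r, hr⟩
  set D := ‖l t - l s‖
  -- pigeonhole: two of the `N + 1` points at distance `m * D / N` from `l s` lie near one `r ∈ R`
  have hlevel : ∀ m ∈ Finset.range (N + 1), ∃ τ ∈ Icc s t, ‖l τ - l s‖ = m * D / N := by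
    intro m hm
    have hmN : (m : ℝ) ≤ N := by exact_mod_cast Finset.mem_range_succ_iff.1 hm
    refine intermediate_value_Icc hst (hl.sub continuousOn_const).norm ⟨?_, ?_⟩
    · simp only [Pi.sub_apply, sub_self, norm_zero]
      positivity
    · rw [div_le_iff₀ hN, mul_comm]
      exact mul_le_mul_of_nonneg_left hmN (norm_nonneg _)
  choose! τ hτ hτD using hlevel
  choose! r hr hrε using fun m (hm : m ∈ Finset.range (N + 1)) => hR (τ m) (hτ m hm)
  obtain ⟨m, hm, m', hm', hmm', hrr'⟩ := Finset.exists_ne_map_eq_of_card_lt_of_maps_to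
    (by simp [N] : R.card < (Finset.range (N + 1)).card) hr
  have hgap : (1 : ℝ) ≤ |(m : ℝ) - m'| := by
    have : (1 : ℤ) ≤ |(m : ℤ) - m'| := Int.one_le_abs (sub_ne_zero.2 (by exact_mod_cast hmm'))
    exact_mod_cast this
  have hclose : |(m : ℝ) - m'| * (D / N) ≤ 2 * ε := calc
    |(m : ℝ) - m'| * (D / N) = |‖l (τ m) - l s‖ - ‖l (τ m') - l s‖| := by
      rw [hτD m hm, hτD m' hm', ← abs_of_nonneg (by positivity : 0 ≤ D / N), ← abs_mul]
      ring_nf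
    _ ≤ ‖l (τ m) - l (τ m')‖ := by
      simpa using abs_norm_sub_norm_le (l (τ m) - l s) (l (τ m') - l s)
    _ ≤ ‖l (τ m) - r m‖ + ‖r m' - l (τ m')‖ := by
      rw [hrr']
      exact norm_sub_le_norm_sub_add_norm_sub _ _ _
    _ ≤ 2 * ε := by
      rw [norm_sub_rev (r m')]
      linarith [hrε m hm, hrε m' hm']
  have hDN : D / N ≤ 2 * ε := (le_mul_of_one_le_left (by positivity) hgap).trans hclose
  rw [div_le_iff₀ hN] at hDN
  linarith

section CNorm

variable {E : Type*} [NormedAddCommGroup E]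

theorem holderConst_nonneg (a : ℝ) (S : Set ℝ) (g : ℝ → E) : 0 ≤ HolderConst a S g :=
  Real.sSup_nonneg <| by
    rintro r ⟨x, -, y, -, -, rfl⟩
    positivity

theorem cNorm_nonneg (d : ℕ → ℝ → E) (k : ℕ) (S : Set ℝ) : 0 ≤ CNorm d k S := by
  refine add_nonneg (Real.sSup_nonneg ?_) (holderConst_nonneg _ _ _)
  rintro r ⟨i, -, x, -, rfl⟩
  positivity

variable [NormedSpace ℝ E] {d : ℕ → ℝ → E} {k : ℕ} {S : Set ℝ}

theorem MemCk1.continuousOn (h : MemCk1 d k S) {i : ℕ} (hi : i ≤ k) :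
    ContinuousOn (d i) S := by
  rcases hi.lt_or_eq with hi | rfl
  · exact fun x hx => (h.1 i hi x hx).continuousWithinAt
  · obtain ⟨L, hL⟩ := h.2
    refine (LipschitzOnWith.of_dist_le' (K := L) fun x hx y hy => ?_).continuousOn
    simpa only [dist_eq_norm, Real.norm_eq_abs] using hL x hx y hy

theorem MemCk1.norm_le_cNorm (h : MemCk1 d k S) (hS : IsCompact S) {i : ℕ} (hi : i ≤ k)
    {x : ℝ} (hx : x ∈ S) : ‖d i x‖ ≤ CNorm d k S := by
  have hbdd : BddAbove {r : ℝ | ∃ i ≤ k, ∃ x ∈ S, r = ‖d i x‖} := by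
    refine ((Set.finite_Iic k).bddAbove_biUnion.2 fun i hi =>
      (hS.image_of_continuousOn (h.continuousOn hi).norm).bddAbove).mono ?_
    rintro r ⟨i, hi, x, hx, rfl⟩
    exact mem_biUnion hi ⟨x, hx, rfl⟩
  exact (le_csSup hbdd ⟨i, hi, x, hx, rfl⟩).trans
    (le_add_of_nonneg_right (holderConst_nonneg _ _ _))

theorem MemCk1.norm_sub_le_cNorm_mul (h : MemCk1 d k S) (hS : IsCompact S)
    (hSc : Convex ℝ S) (hk : k ≠ 0) {x y : ℝ} (hx : x ∈ S) (hy : y ∈ S) :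
    ‖d 0 x - d 0 y‖ ≤ CNorm d k S * |x - y| := by
  simpa only [Real.norm_eq_abs] using hSc.norm_image_sub_le_of_norm_hasDerivWithin_le
    (fun z hz => h.1 0 (Nat.pos_of_ne_zero hk) z hz)
    (fun z hz => h.norm_le_cNorm hS (Nat.one_le_iff_ne_zero.2 hk) hz) hy hx

end CNorm

theorem le_sup'_rpow_inv_pow {s : Finset ℕ} (hs : s.Nonempty) {f : ℕ → ℝ}
    (hf : ∀ j, 0 ≤ f j) {j : ℕ} (hj : j ∈ s) (hj0 : 0 < j) :
    f j ≤ (s.sup' hs fun j => f j ^ (j : ℝ)⁻¹) ^ j := by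
  have hle := Finset.le_sup' (fun j => f j ^ (j : ℝ)⁻¹) hj
  rw [← Real.rpow_natCast, ← Real.rpow_inv_le_iff_of_pos (hf j)
    ((Real.rpow_nonneg (hf j) _).trans hle) (by positivity)]
  exact hle

theorem one_sub_inv_le_inv_of_lt_div {x p : ℝ} (hx : 1 < x) (hp : 0 < p)
    (h : p < x / (x - 1)) : 1 - 1 / p ≤ x⁻¹ := by
  rw [lt_div_iff₀ (by linarith)] at h
  have hx0 : 0 < x := by linarith
  rw [← sub_nonneg, show x⁻¹ - (1 - 1 / p) = (x - p * (x - 1)) / (p * x) by field_simp; ring]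
  exact div_nonneg (by linarith) (by positivity)

theorem rpow_le_max_one_rpow {δ L e e' : ℝ} (hδ : 0 ≤ δ) (hδL : δ ≤ L) (he : 0 ≤ e)
    (hee' : e ≤ e') : δ ^ e ≤ max 1 (L ^ e') := by
  rcases le_total δ 1 with h1 | h1
  · exact (Real.rpow_le_one hδ h1 he).trans (le_max_left _ _)
  · exact ((Real.rpow_le_rpow_of_exponent_le h1 hee').trans
      (Real.rpow_le_rpow hδ hδL (he.trans hee'))).trans (le_max_right _ _)

theorem holderQuotient_le_of_norm_sub_le {E : Type*} [NormedAddCommGroup E] {l : ℝ → E}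
    {α β A e γ e' : ℝ} (hA : 0 ≤ A) (hγ : γ ≤ e) (he' : e - γ ≤ e')
    (h : ∀ s ∈ Ioo α β, ∀ t ∈ Ioo α β, s < t → ‖l t - l s‖ ≤ A * (t - s) ^ e) :
    ∀ r ∈ {r : ℝ | ∃ t ∈ Ioo α β, ∃ s ∈ Ioo α β, t ≠ s ∧ r = ‖l t - l s‖ / |t - s| ^ γ},
      r ≤ A * max 1 ((β - α) ^ e') := by
  have key : ∀ s ∈ Ioo α β, ∀ t ∈ Ioo α β, s < t →
      ‖l t - l s‖ / |t - s| ^ γ ≤ A * max 1 ((β - α) ^ e') := by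
    intro s hs t ht hst
    have hδ : 0 < t - s := sub_pos.2 hst
    rw [abs_of_pos hδ, div_le_iff₀ (Real.rpow_pos_of_pos hδ _)]
    calc ‖l t - l s‖ ≤ A * ((t - s) ^ (e - γ) * (t - s) ^ γ) := by
          rw [← Real.rpow_add hδ, sub_add_cancel]
          exact h s hs t ht hst
      _ ≤ A * (max 1 ((β - α) ^ e') * (t - s) ^ γ) := by
          gcongr
          exact rpow_le_max_one_rpow hδ.le (by linarith [hs.1, ht.2]) (sub_nonneg.2 hγ) he'
      _ = A * max 1 ((β - α) ^ e') * (t - s) ^ γ := by ring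
  rintro r ⟨t, ht, s, hs, hts, rfl⟩
  rcases hts.lt_or_gt with hlt | hgt
  · rw [norm_sub_rev, abs_sub_comm]
    exact key t ht s hs hlt
  · exact key s hs t ht hgt

theorem norm_sub_le_of_forall_pow_add_sum_eq_zero {𝕜 : Type*} [NormedField 𝕜] [IsAlgClosed 𝕜]
    {n : ℕ} (hn : n ≠ 0) {a : ℕ → ℝ → 𝕜} {l : ℝ → 𝕜} {I : Set ℝ} (hI : I.OrdConnected) {K : ℝ}
    (hK : 0 ≤ K) (hl : ContinuousOn l I)
    (hroot : ∀ τ ∈ I, l τ ^ n + ∑ j ∈ Finset.Icc 1 n, a j τ * l τ ^ (n - j) = 0)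
    (hbound : ∀ τ ∈ I, ‖l τ‖ ≤ 2 * K)
    (ha : ∀ j ∈ Finset.Icc 1 n, ∀ x ∈ I, ∀ y ∈ I, ‖a j x - a j y‖ ≤ K ^ j * |x - y|)
    {s t : ℝ} (hs : s ∈ I) (ht : t ∈ I) (hst : s ≤ t) :
    ‖l t - l s‖ ≤ 4 * n ^ 2 * K * (t - s) ^ (n : ℝ)⁻¹ := by
  have hsub : Icc s t ⊆ I := hI.out hs ht
  set ε := 2 * n * K * (t - s) ^ (n : ℝ)⁻¹
  obtain ⟨R, hRn, hR⟩ := exists_finset_card_le_forall_exists_norm_sub_pow_le hn fun j => a j s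
  have hnear : ∀ τ ∈ Icc s t, ∃ r ∈ R, ‖l τ - r‖ ≤ ε := by
    intro τ hτ
    obtain ⟨r, hr, hle⟩ := hR (l τ)
    refine ⟨r, hr, (pow_le_pow_iff_left₀ (norm_nonneg _) (by positivity) hn).1 ?_⟩
    have hcoeff : ∀ j ∈ Finset.Icc 1 n, ‖a j s - a j τ‖ ≤ K ^ j * (t - s) := fun j hj =>
      (ha j hj s hs τ (hsub hτ)).trans <| by
        gcongr
        rw [abs_sub_comm, abs_of_nonneg (by linarith [hτ.1])]
        linarith [hτ.2]
    calc ‖l τ - r‖ ^ n ≤ n * ((2 * K) ^ n * (t - s)) :=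
          hle.trans (norm_pow_add_sum_le_of_pow_add_sum_eq_zero hK (sub_nonneg.2 hst)
            hcoeff (hroot τ (hsub hτ)) (hbound τ (hsub hτ)))
      _ ≤ n ^ n * ((2 * K) ^ n * (t - s)) := by
          gcongr
          exact_mod_cast Nat.le_self_pow hn n
      _ = ε ^ n := by
          simp only [ε, mul_pow, Real.rpow_inv_natCast_pow (sub_nonneg.2 hst) hn]
          ring
  calc ‖l t - l s‖ ≤ 2 * R.card * ε :=
        norm_sub_le_two_mul_card_mul_of_forall_exists_mem_finset hst (hl.mono hsub) hnear
    _ ≤ 2 * n * ε := by gcongr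
    _ = 4 * n ^ 2 * K * (t - s) ^ (n : ℝ)⁻¹ := by ring

/-- Any continuous root of a monic polynomial of degree `n` with
`C^{n-1,1}` coefficients on a bounded interval `(α,β)` is Hölder continuous of
exponent `γ = 1 - 1/p < 1/n`, with
`sup |λ| + Höld_γ(λ) ≤ C(n,p) max{1,(β-α)^{1/p}} max_j ‖a_j‖_{C^{n-1,1}}^{1/j}`. -/
theorem continuous_root_holder
    (n : ℕ) (hn : 2 ≤ n) (p : ℝ) (hp1 : 1 ≤ p)
    (hp2 : p < (n : ℝ) / ((n : ℝ) - 1)) :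
    ∃ C : ℝ, 0 < C ∧
      ∀ (α β : ℝ), α < β →
      ∀ d : ℕ → ℕ → ℝ → ℂ,
      (∀ j ∈ Finset.Icc 1 n, MemCk1 (d j) (n - 1) (Icc α β)) →
      ∀ l : ℝ → ℂ, ContinuousOn l (Ioo α β) →
      (∀ t ∈ Ioo α β, l t ^ n + ∑ j ∈ Finset.Icc 1 n, d j 0 t * l t ^ (n - j) = 0) →
      BddAbove ((fun t => ‖l t‖) '' Ioo α β) ∧
      BddAbove {r : ℝ | ∃ t ∈ Ioo α β, ∃ s ∈ Ioo α β, t ≠ s ∧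
        r = ‖l t - l s‖ / |t - s| ^ (1 - 1 / p)} ∧
      sSup ((fun t => ‖l t‖) '' Ioo α β) +
        sSup {r : ℝ | ∃ t ∈ Ioo α β, ∃ s ∈ Ioo α β, t ≠ s ∧
          r = ‖l t - l s‖ / |t - s| ^ (1 - 1 / p)} ≤
        C * max 1 ((β - α) ^ (1 / p)) *
          (Finset.Icc 1 n).sup' (Finset.nonempty_Icc.mpr (by omega))
            (fun j => CNorm (d j) (n - 1) (Icc α β) ^ ((j : ℝ)⁻¹)) := by
  have hn1 : (1 : ℝ) < n := by exact_mod_cast hn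
  have hγ : 1 - 1 / p ≤ (n : ℝ)⁻¹ := one_sub_inv_le_inv_of_lt_div hn1 (by linarith) hp2
  have hγp : (n : ℝ)⁻¹ - (1 - 1 / p) ≤ 1 / p := by linarith [inv_le_one_of_one_le₀ hn1.le]
  refine ⟨4 * n ^ 2 + 2, by positivity, fun α β _ d hd l hl hroot => ?_⟩
  set K := (Finset.Icc 1 n).sup' (Finset.nonempty_Icc.mpr (by omega))
    fun j => CNorm (d j) (n - 1) (Icc α β) ^ (j : ℝ)⁻¹
  have hdK : ∀ j ∈ Finset.Icc 1 n, CNorm (d j) (n - 1) (Icc α β) ≤ K ^ j := fun j hj =>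
    le_sup'_rpow_inv_pow _ (fun j => cNorm_nonneg _ _ _) hj (Finset.mem_Icc.1 hj).1
  have hK : 0 ≤ K := (Real.rpow_nonneg (cNorm_nonneg _ _ _) _).trans
    (Finset.le_sup' (fun j => CNorm (d j) (n - 1) (Icc α β) ^ (j : ℝ)⁻¹)
      (Finset.left_mem_Icc.2 (by omega)))
  have hbound : ∀ t ∈ Ioo α β, ‖l t‖ ≤ 2 * K := fun t ht =>
    norm_le_two_mul_of_pow_add_sum_eq_zero hK (fun j hj => ((hd j hj).norm_le_cNorm
      isCompact_Icc (Nat.zero_le _) (Ioo_subset_Icc_self ht)).trans (hdK j hj)) (hroot t ht)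
  have hlip : ∀ j ∈ Finset.Icc 1 n, ∀ x ∈ Ioo α β, ∀ y ∈ Ioo α β,
      ‖d j 0 x - d j 0 y‖ ≤ K ^ j * |x - y| := fun j hj x hx y hy =>
    ((hd j hj).norm_sub_le_cNorm_mul isCompact_Icc (convex_Icc α β) (by omega)
      (Ioo_subset_Icc_self hx) (Ioo_subset_Icc_self hy)).trans (by gcongr; exact hdK j hj)
  have hholder : ∀ s ∈ Ioo α β, ∀ t ∈ Ioo α β, s < t →
      ‖l t - l s‖ ≤ 4 * n ^ 2 * K * (t - s) ^ (n : ℝ)⁻¹ := fun s hs t ht hst =>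
    norm_sub_le_of_forall_pow_add_sum_eq_zero (by omega) ordConnected_Ioo hK hl hroot hbound
      hlip hs ht hst.le
  have hquot := holderQuotient_le_of_norm_sub_le (by positivity) hγ hγp hholder
  have hnorm : ∀ r ∈ (fun t => ‖l t‖) '' Ioo α β, r ≤ 2 * K := by
    rintro _ ⟨t, ht, rfl⟩
    exact hbound t ht
  refine ⟨⟨_, hnorm⟩, ⟨_, hquot⟩, ?_⟩
  calc _ ≤ 2 * K + 4 * n ^ 2 * K * max 1 ((β - α) ^ (1 / p)) :=
        add_le_add (Real.sSup_le hnorm (by positivity)) (Real.sSup_le hquot (by positivity))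
    _ ≤ _ := by nlinarith [le_max_left 1 ((β - α) ^ (1 / p))]
end
end

section
/- Let n₁, n₂ ≥ 1 and n = n₁ + n₂. For b ∈ ℂ^{n₁} write P_b(Z) = Z^{n₁} + Σ_{i=1}^{n₁} b_i Z^{n₁−i}, and similarly for c ∈ ℂ^{n₂} and a ∈ ℂ^{n}. Suppose a ∈ ℂ^n, b ∈ ℂ^{n₁}, c ∈ ℂ^{n₂} satisfy P_a = P_b · P_c (as polynomials) and P_b and P_c have no common root in ℂ. Then there exist an open neighborhood U ⊆ ℂ^n of a and analytic (holomorphic) maps β : U → ℂ^{n₁} and γ : U → ℂ^{n₂} with β(a) = b, γ(a) = c, and P_{a'} = P_{β(a')} · P_{γ(a')} for all a' ∈ U. -/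
/-!
The coefficients of `P_b · P_c` depend polynomially on `(b, c)`, so the multiplication map
`(b, c) ↦ a` is analytic. Its derivative at `(b, c)` is `(u, v) ↦ u · P_c + v · P_b`, with `u`, `v`
read as polynomials of degree `< n₁`, `< n₂`. If this vanishes then `P_b ∣ u · P_c`, so `P_b ∣ u`
by coprimality and `u = 0` by degree, and then `v = 0`. The derivative is thus an injective map
between spaces of dimension `n₁ + n₂`, hence invertible, and the analytic inverse function theorem
inverts the multiplication map near `a`.
-/

open Set Polynomial

noncomputable section

/-- The monic polynomial `Z^n + ∑_{j=1}^n a_j Z^{n-j}` associated with the coefficient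
vector `a ∈ ℂ^n` (here `a i` corresponds to `a_{i+1}`). -/
def monicPoly {n : ℕ} (a : Fin n → ℂ) : Polynomial ℂ :=
  X ^ n + ∑ i : Fin n, C (a i) * X ^ (n - 1 - (i : ℕ))

section Encoding

variable (R : Type*) [CommRing R] (n : ℕ)

def lowerPoly : (Fin n → R) →ₗ[R] R[X] :=
  Fintype.linearCombination R fun i : Fin n => (X ^ (n - 1 - (i : ℕ)) : R[X])

def coeffVec : R[X] →ₗ[R] Fin n → R :=
  LinearMap.pi fun i : Fin n => lcoeff R (n - 1 - (i : ℕ))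

variable {R n}

@[simp]
lemma coeffVec_apply (p : R[X]) (i : Fin n) : coeffVec R n p i = p.coeff (n - 1 - i) := rfl

lemma degree_lowerPoly_lt (a : Fin n → R) : (lowerPoly R n a).degree < n := by
  rw [← mem_degreeLT, lowerPoly, Fintype.linearCombination_apply]
  refine Submodule.sum_mem _ fun i _ => Submodule.smul_mem _ _ (mem_degreeLT.2 ?_)
  exact (degree_X_pow_le _).trans_lt (by exact_mod_cast (by omega : n - 1 - (i : ℕ) < n))

@[simp]
lemma coeffVec_lowerPoly (a : Fin n → R) : coeffVec R n (lowerPoly R n a) = a := by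
  ext i
  simp only [coeffVec_apply, lowerPoly, Fintype.linearCombination_apply, finsetSum_coeff,
    coeff_smul, coeff_X_pow, smul_eq_mul, mul_ite, mul_one, mul_zero]
  rw [Finset.sum_eq_single i (fun j _ hj => if_neg fun h => hj (by omega)) (by simp), if_pos rfl]

@[simp]
lemma coeffVec_X_pow_self : coeffVec R n (X ^ n) = 0 := by
  ext i
  simp [coeff_X_pow]
  omega

lemma eq_zero_of_coeffVec_eq_zero {p : R[X]} (hp : p.degree < n) (h : coeffVec R n p = 0) :
    p = 0 := by
  ext k
  rcases lt_or_ge k n with hk | hk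
  · simpa [show n - 1 - (n - 1 - k) = k by omega] using congrFun h ⟨n - 1 - k, by omega⟩
  · exact coeff_eq_zero_of_degree_lt (hp.trans_le (by exact_mod_cast hk))

lemma lowerPoly_coeffVec {p : R[X]} (hp : p.degree < n) : lowerPoly R n (coeffVec R n p) = p :=
  sub_eq_zero.1 <| eq_zero_of_coeffVec_eq_zero
    ((degree_sub_le _ _).trans_lt (max_lt (degree_lowerPoly_lt _) hp)) (by simp)

lemma lowerPoly_injective : Function.Injective (lowerPoly R n) :=
  Function.LeftInverse.injective coeffVec_lowerPoly

end Encoding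

lemma monicPoly_eq_X_pow_add_lowerPoly {n : ℕ} (a : Fin n → ℂ) :
    monicPoly a = X ^ n + lowerPoly ℂ n a := by
  simp [monicPoly, lowerPoly, Fintype.linearCombination_apply, smul_eq_C_mul]

lemma monic_monicPoly {n : ℕ} (a : Fin n → ℂ) : (monicPoly a).Monic := by
  rw [monicPoly_eq_X_pow_add_lowerPoly]
  exact monic_X_pow_add (degree_lowerPoly_lt a)

lemma natDegree_monicPoly {n : ℕ} (a : Fin n → ℂ) : (monicPoly a).natDegree = n := by
  rw [monicPoly_eq_X_pow_add_lowerPoly, natDegree_add_eq_left_of_degree_lt, natDegree_X_pow]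
  simpa using degree_lowerPoly_lt a

@[simp]
lemma coeffVec_monicPoly {n : ℕ} (a : Fin n → ℂ) : coeffVec ℂ n (monicPoly a) = a := by
  simp [monicPoly_eq_X_pow_add_lowerPoly]

lemma monicPoly_coeffVec {n : ℕ} {p : ℂ[X]} (hp : p.Monic) (hd : p.natDegree = n) :
    monicPoly (coeffVec ℂ n p) = p := by
  have hdeg : p.degree = n := by rw [degree_eq_natDegree hp.ne_zero, hd]
  have hlt : (p - X ^ n).degree < (n : WithBot ℕ) := by
    simpa [hdeg] using degree_sub_lt_left (q := X ^ n) (by rw [hdeg, degree_X_pow]) hp.ne_zero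
      (by rw [hp.leadingCoeff, (monic_X_pow n).leadingCoeff])
  calc monicPoly (coeffVec ℂ n p) = X ^ n + lowerPoly ℂ n (coeffVec ℂ n (p - X ^ n)) := by
        rw [map_sub, coeffVec_X_pow_self, sub_zero, monicPoly_eq_X_pow_add_lowerPoly]
    _ = p := by rw [lowerPoly_coeffVec hlt, add_sub_cancel]

lemma degree_lowerPoly_mul_monicPoly_lt {m k : ℕ} (u : Fin m → ℂ) (w : Fin k → ℂ) :
    (lowerPoly ℂ m u * monicPoly w).degree < (m + k : ℕ) := by
  rw [degree_mul, degree_eq_natDegree (monic_monicPoly w).ne_zero, natDegree_monicPoly,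
    Nat.cast_add]
  exact WithBot.add_lt_add_right WithBot.coe_ne_bot (degree_lowerPoly_lt u)

section InverseFunction

variable {𝕜 E F : Type*} [NontriviallyNormedField 𝕜] [NormedAddCommGroup E] [NormedSpace 𝕜 E]
  [CompleteSpace E] [NormedAddCommGroup F] [NormedSpace 𝕜 F]

theorem HasStrictFDerivAt.exists_analyticOnNhd_rightInverse {f : E → F} {e : E ≃L[𝕜] F} {x : E}
    (hf' : HasStrictFDerivAt f (e : E →L[𝕜] F) x) (hf : AnalyticAt 𝕜 f x) :
    ∃ U : Set F, IsOpen U ∧ f x ∈ U ∧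
      ∃ g : F → E, AnalyticOnNhd 𝕜 g U ∧ g (f x) = x ∧ ∀ y ∈ U, f (g y) = y := by
  set φ := hf'.toOpenPartialHomeomorph f
  have hφ : ⇑φ = f := hf'.toOpenPartialHomeomorph_coe
  have hx : x ∈ φ.source := hf'.mem_toOpenPartialHomeomorph_source
  refine ⟨φ.target ∩ {y | AnalyticAt 𝕜 φ.symm y}, φ.open_target.inter (isOpen_analyticAt 𝕜 _),
    ⟨?_, ?_⟩, φ.symm, fun y hy => hy.2, ?_, fun y hy => ?_⟩
  · rw [← hφ]; exact φ.map_source hx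
  · rw [← hφ]; exact φ.analyticAt_symm' hx (hφ ▸ hf) (hφ ▸ hf'.hasFDerivAt.fderiv)
  · rw [← hφ]; exact φ.left_inv hx
  · rw [← hφ]; exact φ.right_inv hy.1

end InverseFunction

section Multiplication

variable {n₁ n₂ : ℕ}

def mulCoeffs (n₁ n₂ : ℕ) (p : (Fin n₁ → ℂ) × (Fin n₂ → ℂ)) : Fin (n₁ + n₂) → ℂ :=
  coeffVec ℂ (n₁ + n₂) (monicPoly p.1 * monicPoly p.2)

lemma monicPoly_mulCoeffs (p : (Fin n₁ → ℂ) × (Fin n₂ → ℂ)) :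
    monicPoly (mulCoeffs n₁ n₂ p) = monicPoly p.1 * monicPoly p.2 :=
  monicPoly_coeffVec ((monic_monicPoly _).mul (monic_monicPoly _)) <| by
    rw [(monic_monicPoly _).natDegree_mul (monic_monicPoly _), natDegree_monicPoly,
      natDegree_monicPoly]

lemma mulCoeffs_eq_of_monicPoly_eq_mul {a : Fin (n₁ + n₂) → ℂ} {b : Fin n₁ → ℂ}
    {c : Fin n₂ → ℂ} (h : monicPoly a = monicPoly b * monicPoly c) :
    mulCoeffs n₁ n₂ (b, c) = a := by
  rw [mulCoeffs, ← h, coeffVec_monicPoly]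

-- Making the leading coefficient a variable turns `mulCoeffs` into the restriction of a
-- continuous bilinear map, which yields its analyticity and its derivative.
def homogPoly (n : ℕ) : ℂ × (Fin n → ℂ) →ₗ[ℂ] ℂ[X] :=
  (LinearMap.fst ℂ ℂ (Fin n → ℂ)).smulRight (X ^ n) + lowerPoly ℂ n ∘ₗ LinearMap.snd ℂ ℂ _

def mulCoeffsBilin (n₁ n₂ : ℕ) :
    ℂ × (Fin n₁ → ℂ) →L[ℂ] ℂ × (Fin n₂ → ℂ) →L[ℂ] Fin (n₁ + n₂) → ℂ :=
  LinearMap.toContinuousLinearMap <| LinearMap.toContinuousLinearMap.toLinearMap ∘ₗ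
    (((LinearMap.mul ℂ ℂ[X]).compl₁₂ (homogPoly n₁) (homogPoly n₂)).compr₂
      (coeffVec ℂ (n₁ + n₂)))

lemma mulCoeffsBilin_apply (s t : ℂ) (u : Fin n₁ → ℂ) (v : Fin n₂ → ℂ) :
    mulCoeffsBilin n₁ n₂ (s, u) (t, v) =
      coeffVec ℂ (n₁ + n₂) ((s • X ^ n₁ + lowerPoly ℂ n₁ u) * (t • X ^ n₂ + lowerPoly ℂ n₂ v)) :=
  rfl

lemma mulCoeffs_eq_mulCoeffsBilin (p : (Fin n₁ → ℂ) × (Fin n₂ → ℂ)) :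
    mulCoeffs n₁ n₂ p = mulCoeffsBilin n₁ n₂ (1, p.1) (1, p.2) := by
  rw [mulCoeffsBilin_apply, one_smul, one_smul, ← monicPoly_eq_X_pow_add_lowerPoly,
    ← monicPoly_eq_X_pow_add_lowerPoly, mulCoeffs]

lemma analyticAt_mulCoeffs (p : (Fin n₁ → ℂ) × (Fin n₂ → ℂ)) :
    AnalyticAt ℂ (mulCoeffs n₁ n₂) p := by
  have hin : AnalyticAt ℂ
      (fun q : (Fin n₁ → ℂ) × (Fin n₂ → ℂ) => (((1 : ℂ), q.1), ((1 : ℂ), q.2))) p :=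
    (analyticAt_const.prod analyticAt_fst).prod (analyticAt_const.prod analyticAt_snd)
  refine (((mulCoeffsBilin n₁ n₂).analyticAt_bilinear _).comp hin).congr ?_
  exact Filter.Eventually.of_forall fun q => (mulCoeffs_eq_mulCoeffsBilin q).symm

def sylvesterMap (b : Fin n₁ → ℂ) (c : Fin n₂ → ℂ) :
    (Fin n₁ → ℂ) × (Fin n₂ → ℂ) →ₗ[ℂ] Fin (n₁ + n₂) → ℂ :=
  coeffVec ℂ (n₁ + n₂) ∘ₗ ((LinearMap.mulRight ℂ (monicPoly c) ∘ₗ lowerPoly ℂ n₁).coprod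
    (LinearMap.mulRight ℂ (monicPoly b) ∘ₗ lowerPoly ℂ n₂))

lemma sylvesterMap_apply (b : Fin n₁ → ℂ) (c : Fin n₂ → ℂ) (u : Fin n₁ → ℂ) (v : Fin n₂ → ℂ) :
    sylvesterMap b c (u, v) =
      coeffVec ℂ (n₁ + n₂) (lowerPoly ℂ n₁ u * monicPoly c + lowerPoly ℂ n₂ v * monicPoly b) :=
  rfl

lemma hasStrictFDerivAt_mulCoeffs (b : Fin n₁ → ℂ) (c : Fin n₂ → ℂ) :
    HasStrictFDerivAt (mulCoeffs n₁ n₂) (LinearMap.toContinuousLinearMap (sylvesterMap b c))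
      (b, c) := by
  rw [funext mulCoeffs_eq_mulCoeffsBilin]
  refine ((mulCoeffsBilin n₁ n₂).hasStrictFDerivAt_of_bilinear
    ((hasStrictFDerivAt_const _ _).prodMk hasStrictFDerivAt_fst)
    ((hasStrictFDerivAt_const _ _).prodMk hasStrictFDerivAt_snd)).congr_fderiv ?_
  refine ContinuousLinearMap.ext fun ⟨u, v⟩ => ?_
  simp only [ContinuousLinearMap.precompR_apply, ContinuousLinearMap.compL_apply, add_apply,
    ContinuousLinearMap.comp_apply, ContinuousLinearMap.prod_apply, zero_apply,
    ContinuousLinearMap.coe_snd', ContinuousLinearMap.precompL_apply,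
    ContinuousLinearMap.coe_fst', LinearMap.coe_toContinuousLinearMap']
  rw [mulCoeffsBilin_apply, mulCoeffsBilin_apply, ← map_add, sylvesterMap_apply]
  congr 1
  simp only [monicPoly_eq_X_pow_add_lowerPoly, zero_smul, one_smul, zero_add]
  ring

lemma sylvesterMap_injective {b : Fin n₁ → ℂ} {c : Fin n₂ → ℂ}
    (hbc : IsCoprime (monicPoly b) (monicPoly c)) : Function.Injective (sylvesterMap b c) := by
  rw [← LinearMap.ker_eq_bot, LinearMap.ker_eq_bot']
  rintro ⟨u, v⟩ h
  have hsum : lowerPoly ℂ n₁ u * monicPoly c + lowerPoly ℂ n₂ v * monicPoly b = 0 := by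
    refine eq_zero_of_coeffVec_eq_zero ((degree_add_le _ _).trans_lt (max_lt ?_ ?_)) h
    · exact degree_lowerPoly_mul_monicPoly_lt u c
    · rw [add_comm n₁]; exact degree_lowerPoly_mul_monicPoly_lt v b
  have hu : lowerPoly ℂ n₁ u = 0 := by
    refine eq_zero_of_dvd_of_degree_lt (hbc.dvd_of_dvd_mul_right ⟨-lowerPoly ℂ n₂ v, ?_⟩) ?_
    · linear_combination hsum
    · rw [degree_eq_natDegree (monic_monicPoly b).ne_zero, natDegree_monicPoly]
      exact degree_lowerPoly_lt u
  have hv : lowerPoly ℂ n₂ v = 0 := by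
    simpa [hu, (monic_monicPoly b).ne_zero] using hsum
  rw [← map_zero (lowerPoly ℂ n₁), lowerPoly_injective.eq_iff] at hu
  rw [← map_zero (lowerPoly ℂ n₂), lowerPoly_injective.eq_iff] at hv
  simp [hu, hv]

def sylvesterEquiv {b : Fin n₁ → ℂ} {c : Fin n₂ → ℂ}
    (hbc : IsCoprime (monicPoly b) (monicPoly c)) :
    ((Fin n₁ → ℂ) × (Fin n₂ → ℂ)) ≃L[ℂ] Fin (n₁ + n₂) → ℂ :=
  ((sylvesterMap b c).linearEquivOfInjective (sylvesterMap_injective hbc)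
    (by simp)).toContinuousLinearEquiv

end Multiplication

theorem splitting_lemma_general (n₁ n₂ : ℕ)
    (b : Fin n₁ → ℂ) (c : Fin n₂ → ℂ) (a : Fin (n₁ + n₂) → ℂ)
    (hsplit : monicPoly a = monicPoly b * monicPoly c)
    (hnocommon : ¬ ∃ z : ℂ, (monicPoly b).eval z = 0 ∧ (monicPoly c).eval z = 0) :
    ∃ U : Set (Fin (n₁ + n₂) → ℂ), IsOpen U ∧ a ∈ U ∧
      ∃ (B : (Fin (n₁ + n₂) → ℂ) → Fin n₁ → ℂ) (G : (Fin (n₁ + n₂) → ℂ) → Fin n₂ → ℂ),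
        AnalyticOnNhd ℂ B U ∧ AnalyticOnNhd ℂ G U ∧ B a = b ∧ G a = c ∧
        ∀ a' ∈ U, monicPoly a' = monicPoly (B a') * monicPoly (G a') := by
  have hbc : IsCoprime (monicPoly b) (monicPoly c) := by
    rw [isCoprime_iff_aeval_ne_zero_of_isAlgClosed ℂ ℂ]
    intro z
    by_contra! h
    exact hnocommon ⟨z, by simpa [coe_aeval_eq_eval] using h⟩
  have hderiv : HasStrictFDerivAt (mulCoeffs n₁ n₂) (sylvesterEquiv hbc : _ →L[ℂ] _) (b, c) :=
    hasStrictFDerivAt_mulCoeffs b c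
  obtain ⟨U, hU, haU, g, hg, hgb, hgU⟩ :=
    hderiv.exists_analyticOnNhd_rightInverse (analyticAt_mulCoeffs (b, c))
  rw [mulCoeffs_eq_of_monicPoly_eq_mul hsplit] at haU hgb
  refine ⟨U, hU, haU, fun y => (g y).1, fun y => (g y).2,
    fun y hy => analyticAt_fst.comp (hg y hy), fun y hy => analyticAt_snd.comp (hg y hy),
    congrArg Prod.fst hgb, congrArg Prod.snd hgb, fun y hy => ?_⟩
  simpa [hgU y hy] using monicPoly_mulCoeffs (g y)

/-- **splitting lemma.** If `P_a = P_b · P_c` with `P_b`, `P_c` monic without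
common root, then locally around `a` the splitting persists with analytic coefficient maps. -/
theorem splitting_lemma (n₁ n₂ : ℕ) (h₁ : 1 ≤ n₁) (h₂ : 1 ≤ n₂)
    (b : Fin n₁ → ℂ) (c : Fin n₂ → ℂ) (a : Fin (n₁ + n₂) → ℂ)
    (hsplit : monicPoly a = monicPoly b * monicPoly c)
    (hnocommon : ¬ ∃ z : ℂ, (monicPoly b).eval z = 0 ∧ (monicPoly c).eval z = 0) :
    ∃ U : Set (Fin (n₁ + n₂) → ℂ), IsOpen U ∧ a ∈ U ∧
      ∃ (B : (Fin (n₁ + n₂) → ℂ) → Fin n₁ → ℂ) (G : (Fin (n₁ + n₂) → ℂ) → Fin n₂ → ℂ),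
        AnalyticOnNhd ℂ B U ∧ AnalyticOnNhd ℂ G U ∧ B a = b ∧ G a = c ∧
        ∀ a' ∈ U, monicPoly a' = monicPoly (B a') * monicPoly (G a') :=
  splitting_lemma_general n₁ n₂ b c a hsplit hnocommon
end
end

section
/- Let m ≥ 1 be an integer and α ∈ (0,1]. There exists a constant C depending only on m and α with the following property. Let P(x) = a₁x + a₂x² + ⋯ + a_m x^m be a polynomial with complex coefficients, let A, M ≥ 0 and B > 0, and suppose |P(x)| ≤ A(1 + M x^{m+α}) for all real x ∈ [0,B]. Then |a_j| ≤ C · A · (1 + M^{j/(m+α)} B^j) · B^{-j} for every j = 1,…,m. -/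
/-!
On `[0, 1]` the coefficients of `∑_{j=1}^m a_j x^j` are controlled by its values at the nodes
`1, 1/2, …, 1/m`, because the matrix `(x_i ^ j)` is a Vandermonde matrix times an invertible
diagonal one. Rescaling `x ↦ b x` with `b = B / (1 + M^{1/(m+α)} B)` keeps `M (b x)^{m+α} ≤ 1`,
so the rescaled polynomial is bounded by `2A` on `[0, 1]`; undoing the rescaling costs
`(B / b)^j = (1 + M^{1/(m+α)} B)^j ≤ 2^{j-1} (1 + M^{j/(m+α)} B^j)`.
-/

open Set
open scoped Matrix

open Finset in
theorem Finset.sum_Icc_one_eq_sum_fin {M : Type*} [AddCommMonoid M] (m : ℕ) (f : ℕ → M) :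
    ∑ j ∈ Icc 1 m, f j = ∑ k : Fin m, f (k + 1) := by
  rw [Fin.sum_univ_eq_sum_range (fun k => f (k + 1)), range_eq_Ico, sum_Ico_add',
    Ico_add_one_right_eq_Icc, zero_add]

theorem Matrix.isUnit_det_of_pow_succ {K : Type*} [Field K] {n : ℕ} {v : Fin n → K}
    (hv : Function.Injective v) (hv0 : ∀ i, v i ≠ 0) :
    IsUnit (Matrix.of fun i k : Fin n => v i ^ (k + 1 : ℕ)).det := by
  have hfactor : Matrix.of (fun i k : Fin n => v i ^ (k + 1 : ℕ)) =
      Matrix.diagonal v * Matrix.vandermonde v := by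
    ext i k
    simp [Matrix.diagonal_mul, Matrix.vandermonde, pow_succ']
  rw [hfactor, Matrix.det_mul, Matrix.det_diagonal, isUnit_iff_ne_zero]
  exact mul_ne_zero (Finset.prod_ne_zero_iff.mpr fun i _ => hv0 i)
    (Matrix.det_vandermonde_ne_zero_iff.mpr hv)

section

variable {𝕜 : Type*} [RCLike 𝕜]

attribute [local instance] Matrix.linftyOpNormedRing in
theorem exists_norm_le_of_norm_sum_pow_succ_le (n : ℕ) :
    ∃ C : ℝ, 0 < C ∧ ∀ (c : Fin n → 𝕜) (K : ℝ),
      (∀ x ∈ Icc (0 : ℝ) 1, ‖∑ k, c k * (x : 𝕜) ^ (k + 1 : ℕ)‖ ≤ K) → ‖c‖ ≤ C * K := by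
  set node : Fin n → ℝ := fun i => ((i : ℝ) + 1)⁻¹
  have hnode : ∀ i, node i ∈ Icc (0 : ℝ) 1 := fun i =>
    ⟨by positivity, inv_le_one_of_one_le₀ (by simp)⟩
  have hinj : Function.Injective fun i => (node i : 𝕜) := by
    intro i k hik
    exact Fin.ext (by simpa [node] using hik)
  set V := Matrix.of fun i k : Fin n => (node i : 𝕜) ^ (k + 1 : ℕ)
  have hV : IsUnit V.det := Matrix.isUnit_det_of_pow_succ hinj fun i => by
    simp only [node, ne_eq, map_eq_zero, inv_eq_zero]; positivity
  refine ⟨‖V⁻¹‖ + 1, by positivity, fun c K hK => ?_⟩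
  have hK0 : 0 ≤ K := by simpa using hK 0 ⟨le_rfl, zero_le_one⟩
  have hVc : ‖V *ᵥ c‖ ≤ K := by
    refine (pi_norm_le_iff_of_nonneg hK0).mpr fun i => ?_
    simpa [V, Matrix.mulVec, dotProduct, mul_comm] using hK (node i) (hnode i)
  calc ‖c‖ = ‖V⁻¹ *ᵥ (V *ᵥ c)‖ := by
        rw [Matrix.mulVec_mulVec, Matrix.nonsing_inv_mul V hV, Matrix.one_mulVec]
    _ ≤ ‖V⁻¹‖ * K := (Matrix.linfty_opNorm_mulVec _ _).trans (by gcongr)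
    _ ≤ (‖V⁻¹‖ + 1) * K := by gcongr; linarith

theorem exists_norm_coeff_le_of_norm_le_on_unitInterval (m : ℕ) :
    ∃ C : ℝ, 0 < C ∧ ∀ (a : ℕ → 𝕜) (K : ℝ),
      (∀ x ∈ Icc (0 : ℝ) 1, ‖∑ j ∈ Finset.Icc 1 m, a j * (x : 𝕜) ^ j‖ ≤ K) →
      ∀ j ∈ Finset.Icc 1 m, ‖a j‖ ≤ C * K := by
  obtain ⟨C, hC, hcoeff⟩ := exists_norm_le_of_norm_sum_pow_succ_le (𝕜 := 𝕜) m
  refine ⟨C, hC, fun a K hK j hj => ?_⟩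
  obtain ⟨hj1, hjm⟩ := Finset.mem_Icc.mp hj
  have hc := hcoeff (fun k => a (k + 1)) K fun x hx => by
    simpa only [Finset.sum_Icc_one_eq_sum_fin] using hK x hx
  calc ‖a j‖ = ‖a ((⟨j - 1, by omega⟩ : Fin m) + 1 : ℕ)‖ := by
        rw [Fin.val_mk, Nat.sub_add_cancel hj1]
    _ ≤ C * K := (norm_le_pi_norm (fun k : Fin m => a (k + 1)) _).trans hc

theorem norm_coeff_mul_pow_le {m : ℕ} {C : ℝ}
    (hcoeff : ∀ (a : ℕ → 𝕜) (K : ℝ),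
      (∀ x ∈ Icc (0 : ℝ) 1, ‖∑ j ∈ Finset.Icc 1 m, a j * (x : 𝕜) ^ j‖ ≤ K) →
      ∀ j ∈ Finset.Icc 1 m, ‖a j‖ ≤ C * K)
    {a : ℕ → 𝕜} {A M B b e : ℝ} (hA : 0 ≤ A) (hM : 0 ≤ M) (he : 0 ≤ e) (hb : 0 ≤ b)
    (hbB : b ≤ B)
    (hP : ∀ x ∈ Icc (0 : ℝ) B, ‖∑ j ∈ Finset.Icc 1 m, a j * (x : 𝕜) ^ j‖ ≤ A * (1 + M * x ^ e))
    {j : ℕ} (hj : j ∈ Finset.Icc 1 m) :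
    ‖a j‖ * b ^ j ≤ C * (A * (1 + M * b ^ e)) := by
  have hrescaled : ∀ x ∈ Icc (0 : ℝ) 1,
      ‖∑ j ∈ Finset.Icc 1 m, a j * (b : 𝕜) ^ j * (x : 𝕜) ^ j‖ ≤ A * (1 + M * b ^ e) := by
    rintro x ⟨hx0, hx1⟩
    have hbx : b * x ≤ b := mul_le_of_le_one_right hb hx1
    calc ‖∑ j ∈ Finset.Icc 1 m, a j * (b : 𝕜) ^ j * (x : 𝕜) ^ j‖
        = ‖∑ j ∈ Finset.Icc 1 m, a j * ((b * x : ℝ) : 𝕜) ^ j‖ := by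
          simp only [RCLike.ofReal_mul, mul_pow, mul_assoc]
      _ ≤ A * (1 + M * (b * x) ^ e) := hP _ ⟨by positivity, hbx.trans hbB⟩
      _ ≤ A * (1 + M * b ^ e) := by gcongr
  simpa [norm_mul, norm_pow, abs_of_nonneg hb] using hcoeff _ _ hrescaled j hj

theorem mul_rpow_div_one_add_le_one {M B e : ℝ} (hM : 0 ≤ M) (hB : 0 ≤ B) (he : 0 < e) :
    M * (B / (1 + M ^ e⁻¹ * B)) ^ e ≤ 1 := by
  have ht : 0 ≤ M ^ e⁻¹ * B := by positivity
  calc M * (B / (1 + M ^ e⁻¹ * B)) ^ e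
      = (M ^ e⁻¹ * B / (1 + M ^ e⁻¹ * B)) ^ e := by
        rw [mul_div_assoc, Real.mul_rpow (by positivity) (by positivity),
          Real.rpow_inv_rpow hM he.ne']
    _ ≤ 1 := Real.rpow_le_one (by positivity)
        ((div_le_one (by positivity)).mpr (by linarith)) he.le

end

theorem coefficient_estimates_general (m : ℕ) (αe : ℝ) (hα1 : 0 < αe) :
    ∃ C : ℝ, 0 < C ∧
      ∀ (a : ℕ → ℂ) (A M B : ℝ), 0 ≤ A → 0 ≤ M → 0 < B →
      (∀ x : ℝ, x ∈ Icc (0 : ℝ) B →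
        ‖∑ j ∈ Finset.Icc 1 m, a j * (x : ℂ) ^ j‖ ≤ A * (1 + M * x ^ ((m : ℝ) + αe))) →
      ∀ j ∈ Finset.Icc 1 m,
        ‖a j‖ ≤ C * A * (1 + M ^ ((j : ℝ) / ((m : ℝ) + αe)) * B ^ j) * (B ^ j)⁻¹ := by
  obtain ⟨C, hC, hcoeff⟩ := exists_norm_coeff_le_of_norm_le_on_unitInterval (𝕜 := ℂ) m
  refine ⟨2 ^ (m + 1) * C, by positivity, fun a A M B hA hM hB hP j hj => ?_⟩
  set e := (m : ℝ) + αe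
  have he : 0 < e := by positivity
  set t := M ^ e⁻¹ * B
  have ht : 0 ≤ t := by positivity
  have hbound := norm_coeff_mul_pow_le hcoeff hA hM he.le (by positivity : 0 ≤ B / (1 + t))
    (div_le_self hB.le (by linarith)) hP hj
  have htj : t ^ j = M ^ ((j : ℝ) / e) * B ^ j := by
    rw [mul_pow, ← Real.rpow_natCast, ← Real.rpow_mul hM, inv_mul_eq_div]
  have hpow : (1 + t) ^ j ≤ 2 ^ m * (1 + t ^ j) := by
    calc (1 + t) ^ j ≤ 2 ^ (j - 1) * (1 ^ j + t ^ j) := add_pow_le zero_le_one ht j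
      _ ≤ 2 ^ m * (1 + t ^ j) := by
        rw [one_pow]
        gcongr
        · norm_num
        · exact (Nat.sub_le j 1).trans (Finset.mem_Icc.mp hj).2
  calc ‖a j‖ = ‖a j‖ * (B / (1 + t)) ^ j * ((1 + t) ^ j * (B ^ j)⁻¹) := by
        rw [div_pow]; field_simp
    _ ≤ C * (A * 2) * (2 ^ m * (1 + t ^ j) * (B ^ j)⁻¹) := by
        refine mul_le_mul (hbound.trans ?_) (by gcongr) (by positivity) (by positivity)
        gcongr
        linarith [mul_rpow_div_one_add_le_one hM hB.le he]
    _ = 2 ^ (m + 1) * C * A * (1 + M ^ ((j : ℝ) / e) * B ^ j) * (B ^ j)⁻¹ := by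
        rw [htj]; ring

/-- **coefficient estimates.** If `P(x) = ∑_{j=1}^m a_j x^j` satisfies
`|P(x)| ≤ A(1 + M x^{m+α})` on `[0,B]`, then
`|a_j| ≤ C(m,α) · A · (1 + M^{j/(m+α)} B^j) · B^{-j}` for `j = 1,…,m`. -/
theorem coefficient_estimates (m : ℕ) (hm : 1 ≤ m) (αe : ℝ) (hα1 : 0 < αe) (hα2 : αe ≤ 1) :
    ∃ C : ℝ, 0 < C ∧
      ∀ (a : ℕ → ℂ) (A M B : ℝ), 0 ≤ A → 0 ≤ M → 0 < B →
      (∀ x : ℝ, x ∈ Icc (0 : ℝ) B →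
        ‖∑ j ∈ Finset.Icc 1 m, a j * (x : ℂ) ^ j‖ ≤ A * (1 + M * x ^ ((m : ℝ) + αe))) →
      ∀ j ∈ Finset.Icc 1 m,
        ‖a j‖ ≤ C * A * (1 + M ^ ((j : ℝ) / ((m : ℝ) + αe)) * B ^ j) * (B ^ j)⁻¹ :=
  coefficient_estimates_general m αe hα1
end

section
/- Let n ≥ 2 be an integer and I ⊆ ℝ a bounded open interval. For j = 2,…,n let ã_j : I → ℂ be continuous and let r_j : I → ℂ be absolutely continuous with r_j(t)^j = ã_j(t) for all t ∈ I. Let t₀ ∈ I and k ∈ {2,…,n} be such that |ã_k(t₀)|^{1/k} = max_{2≤j≤n} |ã_j(t₀)|^{1/j} ≠ 0, and let 0 < B < 1/3 be such that Σ_{j=2}^n ∫_I |r_j'(s)| ds ≤ B |ã_k(t₀)|^{1/k}. Then for every t ∈ I and every j = 2,…,n: (i) |r_j(t) − r_j(t₀)| ≤ B |ã_k(t₀)|^{1/k}; (ii) 2/3 < 1−B ≤ |ã_k(t)/ã_k(t₀)|^{1/k} ≤ 1+B < 4/3 (in particular ã_k does not vanish on I); (iii) |ã_j(t)|^{1/j}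 ≤ (4/3)|ã_k(t₀)|^{1/k} ≤ 2|ã_k(t)|^{1/k}. -/
open Set MeasureTheory Real

noncomputable section

/-!
Each radical `r_j` is absolutely continuous, so
`|r_j(t) - r_j(t₀)| ≤ ∫_I |r_j'| ≤ B |ã_k(t₀)|^{1/k}`; since `|ã_j|^{1/j} = |r_j|`, (ii) and (iii)
then follow from the triangle inequality and the maximality of `|ã_k(t₀)|^{1/k}`. The first
inequality is the fundamental theorem of calculus for absolutely continuous functions, except that
the integral runs over the whole open interval `I`, so `r_j'` must be integrable there: absolute
continuity on a bounded interval gives bounded variation, and `|f'|` is dominated a.e. by the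
derivative of the variation function `t ↦ V(f, [x, t])`, whose integral is at most the total
variation.
-/

open Filter Topology

section AbsolutelyContinuous

variable {X Y : Type*} [PseudoMetricSpace X] [PseudoMetricSpace Y]

theorem LipschitzWith.comp_absolutelyContinuousOnInterval {g : X → Y} {K : NNReal}
    (hg : LipschitzWith K g) {f : ℝ → X} {a b : ℝ} (hf : AbsolutelyContinuousOnInterval f a b) :
    AbsolutelyContinuousOnInterval (g ∘ f) a b := by
  unfold AbsolutelyContinuousOnInterval at hf ⊢
  refine squeeze_zero (fun _ ↦ Finset.sum_nonneg fun _ _ ↦ dist_nonneg) (fun _ ↦ ?_)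
    (by simpa using Tendsto.const_mul (K : ℝ) hf)
  rw [Finset.mul_sum]
  exact Finset.sum_le_sum fun i _ ↦ hg.dist_le_mul _ _

theorem AbsolutelyContinuousOnInterval.integral_deriv_eq_sub_complex {f : ℝ → ℂ} {a b : ℝ}
    (hf : AbsolutelyContinuousOnInterval f a b) :
    ∫ t in a..b, deriv f t = f b - f a := by
  have hre : AbsolutelyContinuousOnInterval (fun t ↦ (f t).re) a b :=
    Complex.reCLM.lipschitz.comp_absolutelyContinuousOnInterval hf
  have him : AbsolutelyContinuousOnInterval (fun t ↦ (f t).im) a b :=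
    Complex.imCLM.lipschitz.comp_absolutelyContinuousOnInterval hf
  have hderiv : ∀ᵐ t, t ∈ uIoc a b → deriv f t =
      deriv (fun t ↦ (f t).re) t • (1 : ℂ) + deriv (fun t ↦ (f t).im) t • Complex.I := by
    filter_upwards [hre.ae_differentiableAt, him.ae_differentiableAt] with t hret himt ht
    have hre' := (hret (uIoc_subset_uIcc ht)).hasDerivAt.ofReal_comp
    have him' := ((himt (uIoc_subset_uIcc ht)).hasDerivAt.ofReal_comp).mul_const Complex.I
    have hsum := hre'.add him'
    rw [show ((fun y ↦ ((f y).re : ℂ)) + fun y ↦ ((f y).im : ℂ) * Complex.I) = f from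
      funext fun y ↦ Complex.re_add_im (f y)] at hsum
    simp [hsum.deriv, Complex.real_smul]
  have hint : ∀ {g : ℝ → ℝ} (c : ℂ), IntervalIntegrable g volume a b →
      IntervalIntegrable (fun t ↦ g t • c) volume a b :=
    fun c hg ↦ ⟨hg.1.smul_const c, hg.2.smul_const c⟩
  rw [intervalIntegral.integral_congr_ae hderiv,
    intervalIntegral.integral_add (hint _ hre.intervalIntegrable_deriv)
      (hint _ him.intervalIntegrable_deriv),
    intervalIntegral.integral_smul_const, intervalIntegral.integral_smul_const,
    hre.integral_deriv_eq_sub, him.integral_deriv_eq_sub]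
  apply Complex.ext <;> simp

end AbsolutelyContinuous

section BoundedVariation

variable {E : Type*} [NormedAddCommGroup E] {f : ℝ → E}

theorem LocallyBoundedVariationOn.norm_sub_le_variationOnFromTo_sub {s : Set ℝ}
    (hf : LocallyBoundedVariationOn f s) {x t u : ℝ} (hx : x ∈ s) (ht : t ∈ s) (hu : u ∈ s)
    (htu : t ≤ u) :
    ‖f u - f t‖ ≤ variationOnFromTo f s x u - variationOnFromTo f s x t := by
  rw [← variationOnFromTo.add hf hx ht hu, add_sub_cancel_left,
    variationOnFromTo.eq_of_le f s htu, ← dist_eq_norm, dist_comm, dist_edist]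
  exact ENNReal.toReal_mono (hf t u ht hu)
    (eVariationOn.edist_le f ⟨ht, le_rfl, htu⟩ ⟨hu, htu, le_rfl⟩)

variable [NormedSpace ℝ E]

theorem norm_le_of_hasDerivAt_of_norm_sub_le_sub {v : ℝ → ℝ} {f' : E} {v' t : ℝ}
    (hf : HasDerivAt f f' t) (hv : HasDerivAt v v' t)
    (h : ∀ᶠ u in 𝓝[>] t, ‖f u - f t‖ ≤ v u - v t) : ‖f'‖ ≤ v' := by
  have hf' := (hasDerivWithinAt_iff_tendsto_slope' (s := Ioi t) (lt_irrefl t)).1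
    hf.hasDerivWithinAt
  have hv' := (hasDerivWithinAt_iff_tendsto_slope' (s := Ioi t) (lt_irrefl t)).1
    hv.hasDerivWithinAt
  refine le_of_tendsto_of_tendsto hf'.norm hv' ?_
  filter_upwards [h, self_mem_nhdsWithin] with u hu htu
  have hpos : 0 < u - t := sub_pos.2 htu
  rw [slope_def_module, slope_def_field, norm_smul, norm_inv, Real.norm_of_nonneg hpos.le,
    inv_mul_eq_div]
  gcongr

variable [FiniteDimensional ℝ E]

theorem LocallyBoundedVariationOn.integral_norm_deriv_le {s : Set ℝ} (hs : IsOpen s)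
    (hf : LocallyBoundedVariationOn f s) {x y : ℝ} (hxy : x ≤ y) (hsub : Icc x y ⊆ s) :
    IntegrableOn (deriv f) (Ioc x y) ∧
      ∫ t in Ioc x y, ‖deriv f t‖ ≤ variationOnFromTo f s x y := by
  have hx : x ∈ s := hsub (left_mem_Icc.2 hxy)
  set v := variationOnFromTo f s x
  have hvs : MonotoneOn v s := variationOnFromTo.monotoneOn hf hx
  have hv : MonotoneOn v (uIcc x y) := hvs.mono (uIcc_of_le hxy ▸ hsub)
  have hvint : IntegrableOn (deriv v) (Ioc x y) := hv.intervalIntegrable_deriv.1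
  have hdom : ∀ᵐ t ∂volume.restrict (Ioc x y), ‖deriv f t‖ ≤ deriv v t := by
    rw [ae_restrict_iff' measurableSet_Ioc]
    filter_upwards [hf.ae_differentiableWithinAt_of_mem, hvs.ae_differentiableWithinAt_of_mem]
      with t hft hvt ht
    have hts : t ∈ s := hsub (Ioc_subset_Icc_self ht)
    have hnhds := hs.mem_nhds hts
    refine norm_le_of_hasDerivAt_of_norm_sub_le_sub ((hft hts).differentiableAt hnhds).hasDerivAt
      ((hvt hts).differentiableAt hnhds).hasDerivAt ?_
    filter_upwards [nhdsWithin_le_nhds hnhds, self_mem_nhdsWithin] with u hu htu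
    exact hf.norm_sub_le_variationOnFromTo_sub hx hts hu (le_of_lt htu)
  have hint : IntegrableOn (deriv f) (Ioc x y) :=
    hvint.mono' (aestronglyMeasurable_deriv f _) hdom
  refine ⟨hint, ?_⟩
  have hvxy : 0 ≤ v y - v x := sub_nonneg.2 (hv left_mem_uIcc right_mem_uIcc hxy)
  calc ∫ t in Ioc x y, ‖deriv f t‖ ≤ ∫ t in Ioc x y, deriv v t :=
        integral_mono_ae hint.norm hvint hdom
    _ = ∫ t in x..y, deriv v t := (intervalIntegral.integral_of_le hxy).symm
    _ ≤ v y - v x := by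
        have := hv.intervalIntegral_deriv_mem_uIcc
        rw [uIcc_of_le hvxy] at this
        exact this.2
    _ = variationOnFromTo f s x y := by simp [v, variationOnFromTo.self]

theorem BoundedVariationOn.integrableOn_deriv {a b : ℝ} (hf : BoundedVariationOn f (Ioo a b)) :
    IntegrableOn (deriv f) (Ioo a b) := by
  rcases le_or_gt b a with hba | hab
  · simp [Ioo_eq_empty_of_le hba]
  obtain ⟨m, ham, hmb⟩ := exists_between hab
  obtain ⟨u, -, hu, hua⟩ := exists_seq_strictAnti_tendsto' ham
  obtain ⟨w, -, hw, hwb⟩ := exists_seq_strictMono_tendsto' hmb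
  have hloc n := hf.locallyBoundedVariationOn.integral_norm_deriv_le isOpen_Ioo
    ((hu n).2.trans (hw n).1).le (Icc_subset_Ioo (hu n).1 (hw n).2)
  refine (integrableOn_Ioc_of_intervalIntegral_norm_bounded
    (I := (eVariationOn f (Ioo a b)).toReal) (fun n ↦ (hloc n).1) hua hwb
    (Eventually.of_forall fun n ↦ ?_)).mono_set Ioo_subset_Ioc_self
  exact (hloc n).2.trans
    ((le_abs_self _).trans (variationOnFromTo.abs_le_eVariationOn hf))

end BoundedVariation

section AbsContOn

variable {E : Type*} [NormedAddCommGroup E] {f : ℝ → E} {S : Set ℝ}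

theorem AbsContOn.absolutelyContinuousOnInterval (hf : AbsContOn f S) {x y : ℝ}
    (hxy : uIcc x y ⊆ S) : AbsolutelyContinuousOnInterval f x y := by
  rw [absolutelyContinuousOnInterval_iff]
  intro ε hε
  obtain ⟨δ, hδ, H⟩ := hf ε hε
  refine ⟨δ, hδ, fun I ⟨hmem, hdisj⟩ hlen ↦ ?_⟩
  have hdist : ∀ p q : ℝ, dist (f p) (f q) = ‖f (max p q) - f (min p q)‖ := fun p q ↦ by
    rcases le_total p q with h | h
    · simp [h, dist_eq_norm, norm_sub_rev]
    · simp [h, dist_eq_norm]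
  have hlen' : ∀ p q : ℝ, dist p q = max p q - min p q := fun p q ↦ by
    rw [max_sub_min_eq_abs', Real.dist_eq]
  simp only [hdist, hlen', ← Fin.sum_univ_eq_sum_range
    (fun i ↦ max (I.2 i).1 (I.2 i).2 - min (I.2 i).1 (I.2 i).2),
    ← Fin.sum_univ_eq_sum_range
    (fun i ↦ ‖f (max (I.2 i).1 (I.2 i).2) - f (min (I.2 i).1 (I.2 i).2)‖)] at hlen ⊢
  refine H I.1 _ _ (fun i ↦ ⟨min_le_max, ?_⟩) (fun i j hij ↦ ?_) hlen
  · have hi := hmem i (Finset.mem_range.2 i.2)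
    exact (uIcc_subset_uIcc hi.1 hi.2).trans hxy
  · exact (hdisj (Finset.mem_coe.2 (Finset.mem_range.2 i.2))
      (Finset.mem_coe.2 (Finset.mem_range.2 j.2)) (Fin.val_ne_of_ne hij)).mono
      Ioo_subset_Ioc_self Ioo_subset_Ioc_self

theorem AbsContOn.exists_eVariationOn_inter_Icc_le_one (hf : AbsContOn f S)
    (hS : S.OrdConnected) : ∃ δ > 0, ∀ p : ℝ, eVariationOn f (S ∩ Icc p (p + δ)) ≤ 1 := by
  obtain ⟨δ, hδ, H⟩ := hf 1 one_pos
  refine ⟨δ / 2, half_pos hδ, fun p ↦ iSup_le fun ⟨n, u, hu, us⟩ ↦ ?_⟩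
  have hdisj := hu.pairwise_disjoint_on_Ioo_succ
  simp only [Order.succ_eq_add_one] at hdisj
  have hlen : ∑ i : Fin n, (u (i + 1) - u i) < δ := by
    rw [Fin.sum_univ_eq_sum_range (fun i ↦ u (i + 1) - u i), Finset.sum_range_sub]
    linarith [(us n).2.2, (us 0).2.1]
  have h := H n (fun i ↦ u i) (fun i ↦ u (i + 1))
    (fun i ↦ ⟨hu (Nat.le_succ _), hS.out (us _).1 (us _).1⟩)
    (fun i j hij ↦ hdisj (Fin.val_ne_of_ne hij)) hlen
  rw [Fin.sum_univ_eq_sum_range (fun i ↦ ‖f (u (i + 1)) - f (u i)‖)] at h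
  calc ∑ i ∈ Finset.range n, edist (f (u (i + 1))) (f (u i))
      = ENNReal.ofReal (∑ i ∈ Finset.range n, ‖f (u (i + 1)) - f (u i)‖) := by
        rw [ENNReal.ofReal_sum_of_nonneg fun _ _ ↦ norm_nonneg _]
        simp only [edist_dist, dist_eq_norm]
    _ ≤ 1 := ENNReal.ofReal_le_one.2 h.le

theorem AbsContOn.boundedVariationOn {a b : ℝ} (hf : AbsContOn f (Ioo a b)) :
    BoundedVariationOn f (Ioo a b) := by
  obtain ⟨δ, hδ, H⟩ := hf.exists_eVariationOn_inter_Icc_le_one ordConnected_Ioo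
  -- `N` is the least natural number with `a + N δ ≥ b`, so the inner division points
  -- `a + i δ`, `0 < i < N`, lie in `(a, b)`.
  set N := ⌈(b - a) / δ⌉₊
  have hmono : Monotone fun i : ℕ ↦ a + i * δ := fun i j hij ↦
    add_le_add_right (mul_le_mul_of_nonneg_right (Nat.cast_le.2 hij) hδ.le) a
  have hcover : Ioo a b ∩ Icc a (a + N * δ) = Ioo a b := by
    refine inter_eq_left.2 fun t ht ↦ ⟨ht.1.le, ht.2.le.trans ?_⟩
    have := Nat.le_ceil ((b - a) / δ)
    rw [div_le_iff₀ hδ] at this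
    linarith
  have hsplit := eVariationOn.sum f (s := Ioo a b) hmono (n := N) fun i hi hiN ↦ by
    have := Nat.lt_ceil.1 hiN
    rw [lt_div_iff₀ hδ] at this
    exact ⟨by nlinarith [(Nat.cast_pos.2 hi : (0 : ℝ) < i)], by linarith⟩
  simp only [CharP.cast_eq_zero, zero_mul, add_zero, hcover] at hsplit
  refine ne_top_of_le_ne_top (b := N) (by simp) ?_
  rw [← hsplit]
  calc ∑ i ∈ Finset.range N, eVariationOn f (Ioo a b ∩ Icc (a + i * δ) (a + (i + 1 : ℕ) * δ))
      ≤ ∑ _i ∈ Finset.range N, (1 : ENNReal) := Finset.sum_le_sum fun i _ ↦ by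
        simpa [add_mul, add_assoc] using H (a + i * δ)
    _ = N := by simp

end AbsContOn

theorem AbsContOn.norm_sub_le_integral_norm_deriv {f : ℝ → ℂ} {a b x y : ℝ}
    (hf : AbsContOn f (Ioo a b)) (hx : x ∈ Ioo a b) (hy : y ∈ Ioo a b) :
    ‖f y - f x‖ ≤ ∫ t in Ioo a b, ‖deriv f t‖ := by
  wlog hxy : x ≤ y generalizing x y
  · rw [norm_sub_rev]
    exact this hy hx (le_of_not_ge hxy)
  have hac := hf.absolutelyContinuousOnInterval (ordConnected_Ioo.uIcc_subset hx hy)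
  have hint := hf.boundedVariationOn.integrableOn_deriv
  calc ‖f y - f x‖ = ‖∫ t in x..y, deriv f t‖ := by rw [hac.integral_deriv_eq_sub_complex]
    _ ≤ ∫ t in x..y, ‖deriv f t‖ := intervalIntegral.norm_integral_le_integral_norm hxy
    _ = ∫ t in Ioc x y, ‖deriv f t‖ := intervalIntegral.integral_of_le hxy
    _ ≤ ∫ t in Ioo a b, ‖deriv f t‖ :=
        setIntegral_mono_set hint.norm (Eventually.of_forall fun _ ↦ norm_nonneg _)
          (Eventually.of_forall fun t ht ↦ ⟨hx.1.trans ht.1, ht.2.trans_lt hy.2⟩)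

theorem norm_rpow_inv_eq_norm_of_pow_eq {z w : ℂ} {j : ℕ} (hj : j ≠ 0) (h : z ^ j = w) :
    ‖w‖ ^ ((j : ℝ)⁻¹) = ‖z‖ := by
  rw [← h, norm_pow, Real.pow_rpow_inv_natCast (norm_nonneg z) hj]

theorem coefficient_stability_general (n : ℕ) (a b : ℝ)
    (ta : ℕ → ℝ → ℂ) (r : ℕ → ℝ → ℂ)
    (hAC : ∀ j ∈ Finset.Icc 2 n, AbsContOn (r j) (Ioo a b))
    (hroot : ∀ j ∈ Finset.Icc 2 n, ∀ t ∈ Ioo a b, r j t ^ j = ta j t)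
    (t₀ : ℝ) (ht₀ : t₀ ∈ Ioo a b) (k : ℕ) (hk : k ∈ Finset.Icc 2 n)
    (hmax : ∀ j ∈ Finset.Icc 2 n, ‖ta j t₀‖ ^ ((j : ℝ)⁻¹) ≤ ‖ta k t₀‖ ^ ((k : ℝ)⁻¹))
    (hne : ta k t₀ ≠ 0)
    (B : ℝ) (hB : B < 1 / 3)
    (hsum : ∑ j ∈ Finset.Icc 2 n, ∫ t in Ioo a b, ‖deriv (r j) t‖ ≤
      B * ‖ta k t₀‖ ^ ((k : ℝ)⁻¹)) :
    ∀ t ∈ Ioo a b, ∀ j ∈ Finset.Icc 2 n,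
      (‖r j t - r j t₀‖ ≤ B * ‖ta k t₀‖ ^ ((k : ℝ)⁻¹)) ∧
      ((2 : ℝ) / 3 < 1 - B ∧
        1 - B ≤ (‖ta k t‖ / ‖ta k t₀‖) ^ ((k : ℝ)⁻¹) ∧
        (‖ta k t‖ / ‖ta k t₀‖) ^ ((k : ℝ)⁻¹) ≤ 1 + B ∧
        1 + B < (4 : ℝ) / 3) ∧
      (‖ta j t‖ ^ ((j : ℝ)⁻¹) ≤ 4 / 3 * ‖ta k t₀‖ ^ ((k : ℝ)⁻¹) ∧
        4 / 3 * ‖ta k t₀‖ ^ ((k : ℝ)⁻¹) ≤ 2 * ‖ta k t‖ ^ ((k : ℝ)⁻¹)) := by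
  intro t ht j hj
  set S := ‖ta k t₀‖ ^ ((k : ℝ)⁻¹)
  have hrad : ∀ i ∈ Finset.Icc 2 n, ∀ u ∈ Ioo a b, ‖ta i u‖ ^ ((i : ℝ)⁻¹) = ‖r i u‖ :=
    fun i hi u hu ↦ norm_rpow_inv_eq_norm_of_pow_eq (by grind) (hroot i hi u hu)
  have hdev : ∀ i ∈ Finset.Icc 2 n, ‖r i t - r i t₀‖ ≤ B * S := fun i hi ↦
    calc ‖r i t - r i t₀‖ ≤ ∫ s in Ioo a b, ‖deriv (r i) s‖ :=
          (hAC i hi).norm_sub_le_integral_norm_deriv ht₀ ht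
      _ ≤ ∑ i ∈ Finset.Icc 2 n, ∫ s in Ioo a b, ‖deriv (r i) s‖ :=
          Finset.single_le_sum (f := fun i ↦ ∫ s in Ioo a b, ‖deriv (r i) s‖)
            (fun _ _ ↦ integral_nonneg fun _ ↦ norm_nonneg _) hi
      _ ≤ B * S := hsum
  have hS : 0 < S := Real.rpow_pos_of_pos (norm_pos_iff.2 hne) _
  have hBS : B * S ≤ S / 3 := by nlinarith
  have hk_near := abs_le.1 <| (abs_norm_sub_norm_le (r k t) (r k t₀)).trans (hdev k hk)
  have hj_le : ‖r j t‖ ≤ S + B * S := by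
    have := norm_le_norm_add_norm_sub' (r j t) (r j t₀)
    linarith [hdev j hj, hrad j hj t₀ ht₀ ▸ hmax j hj]
  rw [← hrad k hk t₀ ht₀] at hk_near
  rw [Real.div_rpow (norm_nonneg _) (norm_nonneg _), hrad k hk t ht, hrad j hj t ht,
    le_div_iff₀ hS, div_le_iff₀ hS]
  refine ⟨hdev j hj, ⟨?_, ?_, ?_, ?_⟩, ?_, ?_⟩ <;> linarith

/-- **Lemma lem1.** Under the dominance and smallness assumptions on the
radicals `r_j` of the coefficients `ã_j`, one has for all `t ∈ I`, `j = 2,…,n`: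
(i) `|r_j(t) - r_j(t₀)| ≤ B |ã_k(t₀)|^{1/k}`;
(ii) `2/3 < 1-B ≤ |ã_k(t)/ã_k(t₀)|^{1/k} ≤ 1+B < 4/3`;
(iii) `|ã_j(t)|^{1/j} ≤ (4/3)|ã_k(t₀)|^{1/k} ≤ 2 |ã_k(t)|^{1/k}`. -/
theorem coefficient_stability (n : ℕ) (hn : 2 ≤ n) (a b : ℝ) (hab : a < b)
    (ta : ℕ → ℝ → ℂ) (r : ℕ → ℝ → ℂ)
    (hcont : ∀ j ∈ Finset.Icc 2 n, ContinuousOn (ta j) (Ioo a b))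
    (hAC : ∀ j ∈ Finset.Icc 2 n, AbsContOn (r j) (Ioo a b))
    (hroot : ∀ j ∈ Finset.Icc 2 n, ∀ t ∈ Ioo a b, r j t ^ j = ta j t)
    (t₀ : ℝ) (ht₀ : t₀ ∈ Ioo a b) (k : ℕ) (hk : k ∈ Finset.Icc 2 n)
    (hmax : ∀ j ∈ Finset.Icc 2 n, ‖ta j t₀‖ ^ ((j : ℝ)⁻¹) ≤ ‖ta k t₀‖ ^ ((k : ℝ)⁻¹))
    (hne : ta k t₀ ≠ 0)
    (B : ℝ) (hB0 : 0 < B) (hB : B < 1 / 3)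
    (hsum : ∑ j ∈ Finset.Icc 2 n, ∫ t in Ioo a b, ‖deriv (r j) t‖ ≤
      B * ‖ta k t₀‖ ^ ((k : ℝ)⁻¹)) :
    ∀ t ∈ Ioo a b, ∀ j ∈ Finset.Icc 2 n,
      (‖r j t - r j t₀‖ ≤ B * ‖ta k t₀‖ ^ ((k : ℝ)⁻¹)) ∧
      ((2 : ℝ) / 3 < 1 - B ∧
        1 - B ≤ (‖ta k t‖ / ‖ta k t₀‖) ^ ((k : ℝ)⁻¹) ∧
        (‖ta k t‖ / ‖ta k t₀‖) ^ ((k : ℝ)⁻¹) ≤ 1 + B ∧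
        1 + B < (4 : ℝ) / 3) ∧
      (‖ta j t‖ ^ ((j : ℝ)⁻¹) ≤ 4 / 3 * ‖ta k t₀‖ ^ ((k : ℝ)⁻¹) ∧
        4 / 3 * ‖ta k t₀‖ ^ ((k : ℝ)⁻¹) ≤ 2 * ‖ta k t‖ ^ ((k : ℝ)⁻¹)) :=
  coefficient_stability_general n a b ta r hAC hroot t₀ ht₀ k hk hmax hne B hB hsum
end
end
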